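/- arXiv:math/0501119 — 5 statements merged into one kernel-verified Lean document; each statement's English description precedes it below -/
import Mathlib

section
/- Suppose the dominant roots z₁,…,z_ν (1 < ν < λ−1) all have the same modulus ρ and satisfy z_j^σ = z₁^σ for all j ≤ ν (vertices of a regular σ-gon), and ρ > |z_{ν+1}| > |z_{ν+2}| ≥ … ≥ |z_λ|. Then for n+λ ≡ m (mod σ), V_{n+λ}(z) = (z−z_{ν+1})···(z−z_λ)·z₁^{n+λ−m}·ω_m(z) + D(z)·Σ_{j=ν+1}^λ C_j·z_j^{n+λ}/(z−z_j), where ω_m(z) = Σ_{k=1}^ν C_k·z_k^m·Δ_k(z), Δ(z) = (z−z₁)···(z−z_ν), Δ_k(z) = Δ(z)/(z−z_k). -/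
open Polynomial Finset

/-! Evaluated at `w`, each term of `V_{n+λ}` is `C_j z_j^{n+λ} ∏_{i ≠ j} (w - z_i)`. For a dominant
index the product splits off the common factor `∏_{i ≥ ν} (w - z_i)`, and `z_j^σ = z_1^σ` turns
`z_j^{n+λ}` into `z_j^m z_1^{n+λ-m}`; for a nondominant index the product is `D(w) / (w - z_j)`. -/

theorem pow_eq_pow_mul_pow_of_pow_eq {M : Type*} [Monoid M] {a b : M} {s m N : ℕ}
    (hab : a ^ s = b ^ s) (hN : N % s = m % s) (hmN : m ≤ N) :
    a ^ N = a ^ m * b ^ (N - m) := by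
  obtain ⟨t, ht⟩ : s ∣ N - m := (Nat.modEq_iff_dvd' hmN).mp hN.symm
  calc a ^ N = a ^ m * (a ^ s) ^ t := by rw [← pow_mul, ← ht, ← pow_add, Nat.add_sub_cancel' hmN]
    _ = a ^ m * b ^ (N - m) := by rw [hab, ← pow_mul, ht]

namespace Finset

variable {ι K : Type*} [Fintype ι] [DecidableEq ι]

theorem prod_erase_eq_prod_erase_mul_prod_compl {M : Type*} [CommMonoid M] (x : ι → M)
    {s : Finset ι} {j : ι} (hj : j ∈ s) :
    ∏ i ∈ univ.erase j, x i = (∏ i ∈ s.erase j, x i) * ∏ i ∈ sᶜ, x i := by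
  rw [← prod_filter_mul_prod_filter_not (univ.erase j) (· ∈ s)]
  congr 2
  · ext i; simp [and_comm]
  · ext i
    simp only [mem_filter, mem_erase, mem_univ, mem_compl]
    exact ⟨fun h => h.2, fun h => ⟨⟨fun hij => h (hij ▸ hj), trivial⟩, h⟩⟩

theorem prod_erase_eq_prod_div [Field K] (x : ι → K) {j : ι} (hj : x j ≠ 0) :
    ∏ i ∈ univ.erase j, x i = (∏ i, x i) / x j := by
  rw [eq_div_iff hj, prod_erase_mul _ _ (mem_univ j)]

theorem sum_mul_prod_erase_eq [Field K] (c x : ι → K) (s : Finset ι)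
    (hx : ∀ j ∉ s, x j ≠ 0) :
    ∑ j, c j * ∏ i ∈ univ.erase j, x i =
      (∏ i ∈ sᶜ, x i) * ∑ j ∈ s, c j * ∏ i ∈ s.erase j, x i +
        (∏ i, x i) * ∑ j ∈ sᶜ, c j / x j := by
  rw [← sum_add_sum_compl s, mul_sum, mul_sum]
  congr 1
  · refine sum_congr rfl fun j hj => ?_
    rw [prod_erase_eq_prod_erase_mul_prod_compl x hj]
    ring
  · refine sum_congr rfl fun j hj => ?_
    rw [prod_erase_eq_prod_div x (hx j (mem_compl.mp hj))]
    ring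

end Finset

/-- Splitting of `V_{n+λ}` into dominant and nondominant parts, for `n+λ ≡ m (mod σ)`. -/
theorem stmt4 (lam nu sig mm : ℕ) (hnul : nu + 1 < lam)
    (z A : Fin lam → ℂ)
    (hroot : ∀ j : Fin lam, (j : ℕ) < nu → z j ^ sig = z ⟨0, by omega⟩ ^ sig)
    (n : ℕ) (hn : (n + lam) % sig = mm % sig) (hmn : mm ≤ n + lam)
    (w : ℂ) (hw : ∀ j : Fin lam, nu ≤ (j : ℕ) → w ≠ z j) :
    let D : Polynomial ℂ := ∏ i, (Polynomial.X - Polynomial.C (z i))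
    let Dj : Fin lam → Polynomial ℂ :=
      fun j => ∏ i ∈ Finset.univ.erase j, (Polynomial.X - Polynomial.C (z i))
    let Cc : Fin lam → ℂ := fun j => 1 / (((Dj j).eval (z j)) ^ 2 * A j)
    let V : ℕ → Polynomial ℂ := fun k => ∑ j, Polynomial.C (Cc j * z j ^ k) * Dj j
    let dom : Finset (Fin lam) := Finset.univ.filter (fun j => (j : ℕ) < nu)
    let ω : Polynomial ℂ := ∑ k ∈ dom, Polynomial.C (Cc k * z k ^ mm) *
      ∏ i ∈ dom.erase k, (Polynomial.X - Polynomial.C (z i))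
    (V (n + lam)).eval w =
      (∏ j ∈ Finset.univ.filter (fun j : Fin lam => nu ≤ (j : ℕ)), (w - z j)) *
        (z ⟨0, by omega⟩) ^ (n + lam - mm) * ω.eval w +
      D.eval w * ∑ j ∈ Finset.univ.filter (fun j : Fin lam => nu ≤ (j : ℕ)),
        Cc j * z j ^ (n + lam) / (w - z j) := by
  intro D Dj Cc V dom ω
  have hcompl : domᶜ = univ.filter (fun j : Fin lam => nu ≤ (j : ℕ)) := by
    ext j; simp [dom]
  have hpow (j : Fin lam) (hj : j ∈ dom) :
      z j ^ (n + lam) = z j ^ mm * z ⟨0, by omega⟩ ^ (n + lam - mm) :=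
    pow_eq_pow_mul_pow_of_pow_eq (hroot j (mem_filter.mp hj).2) hn hmn
  have hV : (V (n + lam)).eval w =
      ∑ j, Cc j * z j ^ (n + lam) * ∏ i ∈ univ.erase j, (w - z i) := by
    simp [V, Dj, eval_finsetSum, eval_prod]
  have hω : ω.eval w = ∑ k ∈ dom, Cc k * z k ^ mm * ∏ i ∈ dom.erase k, (w - z i) := by
    simp [ω, eval_finsetSum, eval_prod]
  have hD : D.eval w = ∏ i, (w - z i) := by simp [D, eval_prod]
  have hx (j : Fin lam) (hj : j ∉ dom) : w - z j ≠ 0 :=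
    sub_ne_zero.mpr (hw j (by simpa [dom] using hj))
  rw [hV, sum_mul_prod_erase_eq _ _ dom hx,
    hcompl, hω, hD, mul_assoc _ (z _ ^ _), mul_sum (s := dom) (a := z _ ^ _)]
  congr 2
  refine sum_congr rfl fun j hj => ?_
  rw [hpow j hj]
  ring
end

section
/- Let ζ₀ be a zero of ω_m with ζ₀ ∉ {z_{ν+1},…,z_λ}, D(ζ₀) ≠ 0, and |ζ₀| < |z_{ν+1}|. Then along n ∈ Λ_m the error r(ζ₀) − π_{n,λ−1}(ζ₀) = ζ₀^{n+λ}/(D(ζ₀)·V_{n+λ}(ζ₀)) tends to 0 as n → ∞. -/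
/-!
Evaluate everything at ζ₀. For `k ≡ m (mod σ)` all dominant powers `z_j ^ k` (`j < ν`) equal a
common factor times `z_j ^ m`, so the dominant block of `V_k(ζ₀)` is that factor times
`∏_{i ≥ ν} (ζ₀ - z_i) · ω_m(ζ₀) = 0`. What remains of `V_k(ζ₀)` is governed by the pole `z_ν`:
`V_k(ζ₀) / z_ν ^ k → C_ν D_ν(ζ₀) ≠ 0`, while `(ζ₀ / z_ν) ^ k → 0` since `|ζ₀| < |z_ν|`.
-/

open Polynomial Finset Filter Topology

section

variable {ι : Type*} [DecidableEq ι]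

theorem prod_erase_eq_prod_erase_mul_prod_compl [Fintype ι] (f : ι → ℂ) {s : Finset ι} {j : ι}
    (hj : j ∈ s) :
    ∏ i ∈ univ.erase j, f i = (∏ i ∈ s.erase j, f i) * ∏ i ∈ sᶜ, f i := by
  have hunion : univ.erase j = s.erase j ∪ sᶜ := by
    ext i
    by_cases hi : i ∈ s <;> simp [hi]
    rintro rfl
    exact hi hj
  rw [hunion, prod_union ((disjoint_compl_right).mono_left (erase_subset j s))]

theorem sum_mul_pow_mul_prod_erase_eq_zero [Fintype ι] (z C : ι → ℂ) (ζ c : ℂ) {s : Finset ι}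
    {k m : ℕ}
    (hpow : ∀ j ∈ s, z j ^ k = c * z j ^ m)
    (hω : ∑ j ∈ s, C j * z j ^ m * ∏ i ∈ s.erase j, (ζ - z i) = 0) :
    ∑ j ∈ s, C j * z j ^ k * ∏ i ∈ univ.erase j, (ζ - z i) = 0 := calc
  _ = ∑ j ∈ s, c * (∏ i ∈ sᶜ, (ζ - z i)) * (C j * z j ^ m * ∏ i ∈ s.erase j, (ζ - z i)) := by
    refine sum_congr rfl fun j hj => ?_
    rw [hpow j hj, prod_erase_eq_prod_erase_mul_prod_compl _ hj]
    ring
  _ = 0 := by rw [← mul_sum, hω, mul_zero]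

theorem tendsto_sum_mul_pow_div_pow (b z : ι → ℂ) {t : Finset ι} {j₀ : ι} (hj₀ : j₀ ∈ t)
    (hz₀ : z j₀ ≠ 0) (hlt : ∀ j ∈ t, j ≠ j₀ → ‖z j‖ < ‖z j₀‖) :
    Tendsto (fun k : ℕ => (∑ j ∈ t, b j * z j ^ k) / z j₀ ^ k) atTop (𝓝 (b j₀)) := by
  have hratio : (fun k : ℕ => (∑ j ∈ t, b j * z j ^ k) / z j₀ ^ k) =
      fun k => ∑ j ∈ t, b j * (z j / z j₀) ^ k := by
    ext k
    simp only [sum_div, div_pow, mul_div_assoc]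
  have hlimit : b j₀ = ∑ j ∈ t, if j = j₀ then b j else 0 := by simp [hj₀]
  rw [hratio, hlimit]
  refine tendsto_finsetSum t fun j hj => ?_
  split_ifs with hjj₀
  · subst hjj₀
    simp [div_self hz₀]
  · simpa using (tendsto_pow_atTop_nhds_zero_of_norm_lt_one (by
      rw [norm_div, div_lt_one (norm_pos_iff.mpr hz₀)]
      exact hlt j hj hjj₀)).const_mul (b j)

end

theorem tendsto_pow_div_mul_of_tendsto_div_pow {α : Type*} {l : Filter α} {k : α → ℕ}
    (hk : Tendsto k l atTop) {u : α → ℂ} {w ζ d a : ℂ}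
    (hu : Tendsto (fun x => u x / w ^ k x) l (𝓝 a)) (ha : a ≠ 0) (hd : d ≠ 0)
    (hζ : ‖ζ‖ < ‖w‖) :
    Tendsto (fun x => ζ ^ k x / (d * u x)) l (𝓝 0) := by
  have hw : w ≠ 0 := norm_pos_iff.mp ((norm_nonneg ζ).trans_lt hζ)
  have hgeom : Tendsto (fun x => (ζ / w) ^ k x) l (𝓝 0) :=
    (tendsto_pow_atTop_nhds_zero_of_norm_lt_one (by
      rwa [norm_div, div_lt_one (norm_pos_iff.mpr hw)])).comp hk
  have hquot := hgeom.div (hu.const_mul d) (mul_ne_zero hd ha)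
  rw [zero_div] at hquot
  refine hquot.congr fun x => ?_
  rw [Pi.div_apply, div_pow, ← mul_div_assoc, div_div_div_cancel_right₀ (pow_ne_zero _ hw)]

theorem stmt7 (lam nu sig mm : ℕ) (hnul : nu + 1 < lam)
    (hmm : mm < sig)
    (z Cc : Fin lam → ℂ)
    (hC : ∀ j, Cc j ≠ 0)
    (hroot : ∀ j : Fin lam, (j : ℕ) < nu → z j ^ sig = z ⟨0, by omega⟩ ^ sig)
    (hdrop1 : ∀ j : Fin lam, nu + 1 ≤ (j : ℕ) →
      ‖z j‖ < ‖z ⟨nu, by omega⟩‖)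
    (ζ₀ : ℂ)
    (habs : ‖ζ₀‖ < ‖z ⟨nu, by omega⟩‖) :
    let D : Polynomial ℂ := ∏ i, (Polynomial.X - Polynomial.C (z i))
    let Dj : Fin lam → Polynomial ℂ :=
      fun j => ∏ i ∈ Finset.univ.erase j, (Polynomial.X - Polynomial.C (z i))
    let V : ℕ → Polynomial ℂ := fun k => ∑ j, Polynomial.C (Cc j * z j ^ k) * Dj j
    let dom : Finset (Fin lam) := Finset.univ.filter (fun j => (j : ℕ) < nu)
    let ω : Polynomial ℂ := ∑ k ∈ dom, Polynomial.C (Cc k * z k ^ mm) *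
      ∏ i ∈ dom.erase k, (Polynomial.X - Polynomial.C (z i))
    let Λ : Filter ℕ := atTop ⊓ Filter.principal {n | (n + lam) % sig = mm % sig}
    ω.eval ζ₀ = 0 → D.eval ζ₀ ≠ 0 →
    Tendsto (fun n : ℕ => ζ₀ ^ (n + lam) / (D.eval ζ₀ * (V (n + lam)).eval ζ₀)) Λ (𝓝 0) := by
  intro D Dj V dom ω Λ hω hD
  set jν : Fin lam := ⟨nu, by omega⟩
  have hDj : ∀ j, (Dj j).eval ζ₀ = ∏ i ∈ univ.erase j, (ζ₀ - z i) := fun j => by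
    simp [Dj, eval_prod]
  have hDjν : (Dj jν).eval ζ₀ ≠ 0 := by
    have hfactor : D = (X - C (z jν)) * Dj jν := (mul_prod_erase univ _ (mem_univ jν)).symm
    rw [hfactor, eval_mul] at hD
    exact right_ne_zero_of_mul hD
  have hV : ∀ k, k % sig = mm →
      (V k).eval ζ₀ = ∑ j ∈ domᶜ, (Cc j * (Dj j).eval ζ₀) * z j ^ k := by
    intro k hk
    have hdom : ∑ j ∈ dom, Cc j * z j ^ k * (Dj j).eval ζ₀ = 0 := by
      simp_rw [hDj]
      refine sum_mul_pow_mul_prod_erase_eq_zero z Cc ζ₀ ((z ⟨0, by omega⟩ ^ sig) ^ (k / sig))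
        (fun j hj => ?_) (by simpa [ω, eval_finsetSum, eval_prod] using hω)
      rw [← hroot j (mem_filter.mp hj).2, ← pow_mul, ← pow_add, ← hk, Nat.div_add_mod]
    simp only [V, eval_finsetSum, eval_mul, eval_C]
    rw [← sum_add_sum_compl dom, hdom, zero_add]
    exact sum_congr rfl fun j _ => by ring
  have hzν : z jν ≠ 0 := norm_pos_iff.mp ((norm_nonneg ζ₀).trans_lt habs)
  have hlt : ∀ j ∈ domᶜ, j ≠ jν → ‖z j‖ < ‖z jν‖ := fun j hj hne => by
    have hj' : ¬ (j : ℕ) < nu := by simpa [dom] using hj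
    have hne' : (j : ℕ) ≠ nu := fun h => hne (Fin.ext h)
    exact hdrop1 j (by omega)
  have hΛ : Tendsto (· + lam) Λ atTop := (tendsto_add_atTop_nat lam).mono_left inf_le_left
  have hratio : Tendsto (fun n => (V (n + lam)).eval ζ₀ / z jν ^ (n + lam)) Λ
      (𝓝 (Cc jν * (Dj jν).eval ζ₀)) := by
    refine ((tendsto_sum_mul_pow_div_pow (fun j => Cc j * (Dj j).eval ζ₀) z
      (by simp [dom, jν]) hzν hlt).comp hΛ).congr' ?_
    refine (eventually_principal.mpr fun n hn => ?_).filter_mono inf_le_right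
    simp only [Function.comp_apply, hV _ (hn.trans (Nat.mod_eq_of_lt hmm))]
  exact tendsto_pow_div_mul_of_tendsto_div_pow hΛ hratio (mul_ne_zero (hC jν) hDjν) hD habs
end

section
/- For r(z) = 2/(3(z−1)) + 2/(9(z+1)) + 1/(z−1/2): C₁ = 3/2, C₂ = 1/2, C₃ = 16/9, the roots of ω₀ and ω₁ are ζ₀ = −1/2 and ζ₁ = −2, and the Padé approximants satisfy π_{2m+1,2}(−1/2) = 0 for all m, a value different from r(−1/2) = −1. -/
/-!
The numerator `N = 2/3 (X+1)(X-1/2) + 2/9 (X-1)(X-1/2) + (X-1)(X+1) = 17/9 X² - 11/9` is even.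
For even `k`, evaluating `N V + D U = X^k` at the nodes `±1` gives `V(1) = V(-1)`, so the
quadratic `V` has no odd part and `V(-1/2) = V(1/2)`. Evaluating at `-1/2` and at the node `1/2`
then gives the same value `N(1/2) V(1/2) = (1/2)^k`, which forces `D(-1/2) U(-1/2) = 0`; as
`D(-1/2) ≠ 0`, the Padé value `-U(-1/2)/V(-1/2)` vanishes.
-/

open Polynomial Finset

theorem Polynomial.mul_eval_neg_sub_eval_of_natDegree_le_two {R : Type*} [CommRing R]
    {p : R[X]} (hp : p.natDegree ≤ 2) (s t : R) :
    s * (p.eval (-t) - p.eval t) = t * (p.eval (-s) - p.eval s) := by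
  simp only [eval_eq_sum_range' (Nat.lt_succ_of_le hp), sum_range_succ, sum_range_zero]
  ring

theorem Polynomial.eval_neg_eq_zero_of_mul_add_mul_eq_X_pow {K : Type*} [Field K]
    {N D V U : K[X]} {k : ℕ} {s t : K} (hk : Even k) (hN : ∀ x, N.eval (-x) = N.eval x)
    (hs : s ≠ 0) (hNs : N.eval s ≠ 0) (hDs : D.eval s = 0) (hD_neg_s : D.eval (-s) = 0)
    (hDt : D.eval t = 0) (hD_neg_t : D.eval (-t) ≠ 0) (hV : V.natDegree ≤ 2)
    (h : N * V + D * U = X ^ k) :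
    U.eval (-t) = 0 := by
  have hb : ∀ x, N.eval x * V.eval x + D.eval x * U.eval x = x ^ k := fun x => by
    simpa using congrArg (eval x) h
  have hVs : V.eval (-s) = V.eval s := by
    have h_neg_s := hb (-s)
    rw [hN, hD_neg_s, hk.neg_pow, ← hb s, hDs] at h_neg_s
    exact mul_left_cancel₀ hNs (by simpa using h_neg_s)
  have hVt : V.eval (-t) = V.eval t := by
    have h_odd := V.mul_eval_neg_sub_eval_of_natDegree_le_two hV s t
    rw [hVs, sub_self, mul_zero, mul_eq_zero, sub_eq_zero] at h_odd
    exact h_odd.resolve_left hs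
  have h_neg_t := hb (-t)
  rw [hN, hVt, hk.neg_pow, ← hb t, hDt] at h_neg_t
  exact (mul_eq_zero.mp (by linear_combination h_neg_t)).resolve_left hD_neg_t

/-- Example 4: for `r(z) = 2/(3(z−1)) + 2/(9(z+1)) + 1/(z−1/2)`:
`C₁ = 3/2`, `C₂ = 1/2`, `C₃ = 16/9`, the roots of `ω₀, ω₁` are `−1/2, −2`,
and `π_{2m+1,2}(−1/2) = 0 ≠ r(−1/2) = −1` for every `m`. -/
theorem stmt14 :
    let z : Fin 3 → ℂ := ![1, -1, 1/2]
    let A : Fin 3 → ℂ := ![2/3, 2/9, 1]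
    let Dj : Fin 3 → Polynomial ℂ :=
      fun j => ∏ i ∈ Finset.univ.erase j, (Polynomial.X - Polynomial.C (z i))
    let D : Polynomial ℂ := ∏ i, (Polynomial.X - Polynomial.C (z i))
    let N : Polynomial ℂ := ∑ j, Polynomial.C (A j) * Dj j
    let Cc : Fin 3 → ℂ := fun j => 1 / (((Dj j).eval (z j)) ^ 2 * A j)
    let ω : ℕ → ℂ → ℂ := fun m w => Cc 0 * (z 0) ^ m * (w - z 1) + Cc 1 * (z 1) ^ m * (w - z 0)
    Cc 0 = 3 / 2 ∧ Cc 1 = 1 / 2 ∧ Cc 2 = 16 / 9 ∧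
    (∀ w : ℂ, ω 0 w = 0 ↔ w = -1 / 2) ∧ (∀ w : ℂ, ω 1 w = 0 ↔ w = -2) ∧
    (∀ (m : ℕ) (V U : Polynomial ℂ),
      N * V + D * U = Polynomial.X ^ (2 * m + 4) → V.degree < 3 →
      -(U.eval (-1 / 2)) / V.eval (-1 / 2) = 0 ∧
      -(U.eval (-1 / 2)) / V.eval (-1 / 2) ≠ N.eval (-1 / 2) / D.eval (-1 / 2)) ∧
    N.eval (-1 / 2) / D.eval (-1 / 2) = -1 := by
  intro z A Dj D N Cc ω
  have hDj : ∀ x, (Dj 0).eval x = (x + 1) * (x - 1 / 2) ∧ (Dj 1).eval x = (x - 1) * (x - 1 / 2) ∧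
      (Dj 2).eval x = (x - 1) * (x + 1) := by
    intro x
    simp only [Dj, eval_prod, eval_sub, eval_X, eval_C, show univ.erase (0 : Fin 3) = {1, 2} from rfl,
      show univ.erase (1 : Fin 3) = {0, 2} from rfl, show univ.erase (2 : Fin 3) = {0, 1} from rfl]
    simp [z]
  have hD : ∀ x, D.eval x = (x - 1) * (x + 1) * (x - 1 / 2) := by
    intro x
    simp [D, z, Fin.prod_univ_three]
  have hN : ∀ x, N.eval x = 17 / 9 * x ^ 2 - 11 / 9 := by
    intro x
    simp only [N, Fin.sum_univ_three, eval_add, eval_mul, eval_C, hDj]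
    simp only [A, Matrix.cons_val_zero, Matrix.cons_val_one, Matrix.cons_val]
    ring
  have hC : Cc 0 = 3 / 2 ∧ Cc 1 = 1 / 2 ∧ Cc 2 = 16 / 9 := by
    simp only [Cc, hDj, z, A, Matrix.cons_val_zero, Matrix.cons_val_one, Matrix.cons_val]
    norm_num
  have hr : N.eval (-1 / 2) / D.eval (-1 / 2) = -1 := by
    rw [hN, hD]
    norm_num
  refine ⟨hC.1, hC.2.1, hC.2.2, fun w => ?_, fun w => ?_, fun m V U hB hV => ?_, hr⟩
  · have hω : ω 0 w = 2 * (w - -1 / 2) := by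
      simp only [ω, z, hC, Matrix.cons_val_zero, Matrix.cons_val_one]
      ring
    rw [hω, mul_eq_zero, sub_eq_zero]
    simp
  · have hω : ω 1 w = w - -2 := by
      simp only [ω, z, hC, Matrix.cons_val_zero, Matrix.cons_val_one]
      ring
    rw [hω, sub_eq_zero]
  · have hU : U.eval (-1 / 2) = 0 := by
      rw [neg_div]
      exact eval_neg_eq_zero_of_mul_add_mul_eq_X_pow (s := 1) ⟨m + 2, by ring⟩
        (fun x => by simp only [hN]; ring) one_ne_zero (by norm_num [hN]) (by norm_num [hD])
        (by norm_num [hD]) (by norm_num [hD]) (by norm_num [hD])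
        (natDegree_le_of_degree_le (Order.le_of_lt_succ hV)) hB
    rw [hU, hr]
    norm_num
end

section
/- In Example 1 (r(z) = 1/(z−1) + 1/(18(z+1)) + 1/(z−1/2)), the Padé approximants π_{n,2}(z) converge to r(z) at the point ζ₀ = 1/3 as n → ∞ (through all n), even though ζ₀ is a limit point of poles of the odd-indexed subsequence. -/
open Filter Topology

theorem tendsto_pow_div_zero_of_geometric_le_norm {𝕜 : Type*} [NormedField 𝕜] {q : 𝕜}
    {u : ℕ → 𝕜} {c ρ : ℝ} (hc : 0 < c) (hq : ‖q‖ < ρ) (hu : ∀ n, c * ρ ^ n ≤ ‖u n‖) :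
    Tendsto (fun n => q ^ n / u n) atTop (𝓝 0) := by
  have hρ : 0 < ρ := (norm_nonneg q).trans_lt hq
  have hratio : Tendsto (fun n => c⁻¹ * (‖q‖ / ρ) ^ n) atTop (𝓝 0) := by
    simpa using (tendsto_pow_atTop_nhds_zero_of_lt_one (by positivity)
      ((div_lt_one hρ).2 hq)).const_mul c⁻¹
  refine squeeze_zero_norm (fun n => ?_) hratio
  calc ‖q ^ n / u n‖ = ‖q‖ ^ n / ‖u n‖ := by rw [norm_div, norm_pow]
    _ ≤ ‖q‖ ^ n / (c * ρ ^ n) := by gcongr; exact hu n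
    _ = c⁻¹ * (‖q‖ / ρ) ^ n := by rw [div_pow]; field_simp

/-- `D(1/3) V_k(1/3) = -(4/27) ((2/9)(1 - (-1)^k) + (128/81) 2^{-k})`, and both summands are
nonnegative, so the `2^{-k}` term alone bounds it from below. -/
theorem geometric_le_norm_denominator (k : ℕ) :
    512 / 2187 * (1 / 2 : ℝ) ^ k ≤
      ‖((1/3 - 1) * (1/3 + 1) * (1/3 - 1/2) : ℂ) *
        (1 * (1 : ℂ) ^ k * ((1/3 + 1) * (1/3 - 1/2)) +
          2 * (-1 : ℂ) ^ k * ((1/3 - 1) * (1/3 - 1/2)) +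
          (16/9) * (1/2 : ℂ) ^ k * ((1/3 - 1) * (1/3 + 1)))‖ := by
  have hsign : 0 ≤ 1 - (-1 : ℝ) ^ k := by
    rcases neg_one_pow_eq_or ℝ k with h | h <;> rw [h] <;> norm_num
  have hexpand : ((1/3 - 1) * (1/3 + 1) * (1/3 - 1/2) : ℂ) *
        (1 * (1 : ℂ) ^ k * ((1/3 + 1) * (1/3 - 1/2)) +
          2 * (-1 : ℂ) ^ k * ((1/3 - 1) * (1/3 - 1/2)) +
          (16/9) * (1/2 : ℂ) ^ k * ((1/3 - 1) * (1/3 + 1))) =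
      -((4/27 * (2/9 * (1 - (-1 : ℝ) ^ k) + 128/81 * (1/2 : ℝ) ^ k) : ℝ) : ℂ) := by
    push_cast
    ring
  rw [hexpand, norm_neg, Complex.norm_real, Real.norm_of_nonneg (by positivity)]
  nlinarith

/-- In Example 1 (`r(z) = 1/(z−1) + 1/(18(z+1)) + 1/(z−1/2)`), the Padé approximants
`π_{n,2}` converge to `r` at `ζ₀ = 1/3` through all `n`: by the error formula
`r(1/3) − π_{n,2}(1/3) = (1/3)^{n+3}/(D(1/3)·V_{n+3}(1/3))`, the error tends to `0`,
i.e. `π_{n,2}(1/3) → r(1/3)`. -/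
theorem stmt15 :
    let V : ℕ → ℂ → ℂ := fun k w =>
      1 * (1 : ℂ) ^ k * ((w + 1) * (w - 1/2)) + 2 * (-1 : ℂ) ^ k * ((w - 1) * (w - 1/2)) +
        (16/9) * (1/2 : ℂ) ^ k * ((w - 1) * (w + 1))
    let Dval : ℂ := (1/3 - 1) * (1/3 + 1) * (1/3 - 1/2)
    let rval : ℂ := 1 / (1/3 - 1) + 1 / (18 * (1/3 + 1)) + 1 / (1/3 - 1/2)
    Tendsto (fun n : ℕ => (1/3 : ℂ) ^ (n + 3) / (Dval * V (n + 3) (1/3))) atTop (𝓝 0) ∧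
    Tendsto (fun n : ℕ => rval - (1/3 : ℂ) ^ (n + 3) / (Dval * V (n + 3) (1/3)))
      atTop (𝓝 rval) := by
  intro V Dval rval
  have hnorm : ‖(1/3 : ℂ)‖ < 1/2 := by norm_num
  have herror : Tendsto (fun k : ℕ => (1/3 : ℂ) ^ k / (Dval * V k (1/3))) atTop (𝓝 0) :=
    tendsto_pow_div_zero_of_geometric_le_norm (by norm_num) hnorm geometric_le_norm_denominator
  have hshift := herror.comp (tendsto_add_atTop_nat 3)
  exact ⟨hshift, by simpa using tendsto_const_nhds.sub hshift⟩
end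

section
/- In Example 2 (r(z) = 1/(z−1) + 1/(z+1) + 1/(z−1/2)), the odd-indexed Padé approximants satisfy π_{2m+1,2}(−4/5) → ∞ as m → ∞, i.e., |π_{2m+1,2}(−4/5)| → ∞. -/
/-!
At even indices the contributions of the poles `±1` to `V_k(−4/5)` cancel (this is
`ω₁(−4/5) = 0`), so `V_{2m+4}(−4/5)` is just the contribution of the pole `1/2`, of size `4^{−m}`,
while `(−4/5)^{2m+4}` is of size `(16/25)^m`. The error term is therefore a nonzero multiple of
`(64/25)^m`, which swamps the constant `r(−4/5)`.
-/

open Filter Topology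

theorem tendsto_norm_const_add_mul_pow_atTop {𝕜 : Type*} [NormedField 𝕜] (a : 𝕜) {c q : 𝕜}
    (hc : c ≠ 0) (hq : 1 < ‖q‖) : Tendsto (fun m : ℕ => ‖a + c * q ^ m‖) atTop atTop := by
  have hpow : Tendsto (q ^ ·) atTop (Bornology.cobounded 𝕜) := by
    rw [← tendsto_norm_atTop_iff_cobounded]
    simpa only [norm_pow] using tendsto_pow_atTop_atTop_of_one_lt hq
  rw [tendsto_norm_atTop_iff_cobounded]
  exact (tendsto_const_add_cobounded a).comp ((tendsto_mul_left_cobounded hc).comp hpow)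

noncomputable def padeDenom (k : ℕ) (w : ℂ) : ℂ :=
  1 * (1 : ℂ) ^ k * ((w + 1) * (w - 1/2)) + (1/9) * (-1 : ℂ) ^ k * ((w - 1) * (w - 1/2)) +
    (16/9) * (1/2 : ℂ) ^ k * ((w - 1) * (w + 1))

theorem padeDenom_even (n : ℕ) (w : ℂ) :
    padeDenom (2 * n) w = (w - 1/2) * (10 * w + 8) / 9 + 16/9 * (1/4) ^ n * (w ^ 2 - 1) := by
  simp only [padeDenom, pow_mul]
  norm_num
  ring

theorem padeDenom_even_neg_four_fifths (n : ℕ) :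
    padeDenom (2 * n) (-4/5) = -(16/25) * (1/4) ^ n := by
  rw [padeDenom_even]
  ring

theorem neg_four_fifths_pow_div_padeDenom (m : ℕ) :
    (-4/5 : ℂ) ^ (2 * m + 4) /
        ((-4/5 - 1) * (-4/5 + 1) * (-4/5 - 1/2) * padeDenom (2 * m + 4) (-4/5)) =
      -(2560/117) * (64/25) ^ m := by
  rw [show 2 * m + 4 = 2 * (m + 2) by ring, padeDenom_even_neg_four_fifths, pow_mul]
  have hratio : (64/25 : ℂ) ^ m = (16/25) ^ m / (1/4) ^ m := by rw [← div_pow]; norm_num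
  rw [hratio]
  field_simp
  ring

/-- In Example 2 (`r(z) = 1/(z−1) + 1/(z+1) + 1/(z−1/2)`), the odd-indexed Padé
approximants satisfy `|π_{2m+1,2}(−4/5)| → ∞`, where by the error formula
`π_{2m+1,2}(−4/5) = r(−4/5) − (−4/5)^{2m+4}/(D(−4/5)·V_{2m+4}(−4/5))`. -/
theorem stmt16 :
    let V : ℕ → ℂ → ℂ := fun k w =>
      1 * (1 : ℂ) ^ k * ((w + 1) * (w - 1/2)) + (1/9) * (-1 : ℂ) ^ k * ((w - 1) * (w - 1/2)) +
        (16/9) * (1/2 : ℂ) ^ k * ((w - 1) * (w + 1))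
    let Dval : ℂ := (-4/5 - 1) * (-4/5 + 1) * (-4/5 - 1/2)
    let rval : ℂ := 1 / (-4/5 - 1) + 1 / (-4/5 + 1) + 1 / (-4/5 - 1/2)
    Tendsto (fun m : ℕ => ‖
        (rval - (-4/5 : ℂ) ^ (2 * m + 4) / (Dval * V (2 * m + 4) (-4/5)))‖)
      atTop atTop := by
  intro V Dval rval
  have hterm (m : ℕ) : (-4/5 : ℂ) ^ (2 * m + 4) / (Dval * V (2 * m + 4) (-4/5))
      = -(2560/117) * (64/25) ^ m :=
    neg_four_fifths_pow_div_padeDenom m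
  simp only [hterm, neg_mul, sub_neg_eq_add]
  exact tendsto_norm_const_add_mul_pow_atTop rval (by norm_num) (by norm_num)
end
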